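/- arXiv:1304.6608 — 2 statements merged into one kernel-verified Lean document; each statement's English description precedes it below -/
import Mathlib

section
/- For every N ≥ 1, every finite subset A of ℤ_N, and every n ∈ ℤ_N, the interval vector of the complement satisfies iv(Aᶜ)(n) + 2·|A| = iv(A)(n) + N, where Aᶜ = ℤ_N \ A and |A| is the cardinality of A. -/
/-- The interval vector of a finite subset `A` of `ℤ_N`:
`iv A n = #{(a, b) ∈ A × A : b - a = n}`. -/
def iv {N : ℕ} (A : Finset (ZMod N)) (n : ZMod N) : ℕ :=
  ((A ×ˢ A).filter (fun p => p.2 - p.1 = n)).card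

private lemma iv_eq_filter {N : ℕ} [NeZero N] (A : Finset (ZMod N)) (n : ZMod N) :
    iv A n = (Finset.univ.filter (fun a : ZMod N => a ∈ A ∧ a + n ∈ A)).card := by
  unfold iv
  apply Finset.card_bij' (fun p _ => p.1) (fun a _ => (a, a + n))
  · intro p hp
    simp only [Finset.mem_filter, Finset.mem_product] at hp
    simp only [Finset.mem_filter, Finset.mem_univ, true_and]
    have : p.2 = p.1 + n := by linear_combination hp.2
    exact ⟨hp.1.1, this ▸ hp.1.2⟩
  · intro a ha
    simp only [Finset.mem_filter, Finset.mem_univ, true_and] at ha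
    simp only [Finset.mem_filter, Finset.mem_product]
    exact ⟨⟨ha.1, ha.2⟩, by ring⟩
  · intro p hp
    simp only [Finset.mem_filter, Finset.mem_product] at hp
    have : p.2 = p.1 + n := by linear_combination hp.2
    exact Prod.ext rfl this.symm
  · intro a _; rfl

private lemma shift_card {N : ℕ} [NeZero N] (A : Finset (ZMod N)) (n : ZMod N) :
    (Finset.univ.filter (fun a : ZMod N => a + n ∈ A)).card = A.card := by
  apply Finset.card_bij' (fun a _ => a + n) (fun b _ => b - n)
  · intro a ha; simpa using ha
  · intro b hb; simp [hb]
  · intro a _; ring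
  · intro b _; ring

/-- The interval vector of the complement satisfies
`iv(Aᶜ)(n) + 2·|A| = iv(A)(n) + N`. -/
theorem iv_compl (N : ℕ) [NeZero N] (A : Finset (ZMod N)) (n : ZMod N) :
    iv Aᶜ n + 2 * A.card = iv A n + N := by
  have key : ∀ T : Finset (ZMod N),
      (Finset.univ.filter (fun a : ZMod N => a ∈ A ∧ a + n ∈ T)).card +
      (Finset.univ.filter (fun a : ZMod N => a ∈ Aᶜ ∧ a + n ∈ T)).card = T.card := by
    intro T
    rw [← shift_card T n]
    have h1 : (Finset.univ.filter (fun a : ZMod N => a ∈ A ∧ a + n ∈ T)) =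
        (Finset.univ.filter (fun a : ZMod N => a + n ∈ T)).filter (fun a => a ∈ A) := by
      ext a; simp [and_comm]
    have h2 : (Finset.univ.filter (fun a : ZMod N => a ∈ Aᶜ ∧ a + n ∈ T)) =
        (Finset.univ.filter (fun a : ZMod N => a + n ∈ T)).filter (fun a => ¬ a ∈ A) := by
      ext a; simp [and_comm]
    rw [h1, h2, Finset.card_filter_add_card_filter_not]
  -- similarly split the second coordinate
  have key2 : ∀ S : Finset (ZMod N),
      (Finset.univ.filter (fun a : ZMod N => a ∈ S ∧ a + n ∈ A)).card +
      (Finset.univ.filter (fun a : ZMod N => a ∈ S ∧ a + n ∈ Aᶜ)).card = S.card := by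
    intro S
    have h1 : (Finset.univ.filter (fun a : ZMod N => a ∈ S ∧ a + n ∈ A)) =
        (Finset.univ.filter (fun a : ZMod N => a ∈ S)).filter (fun a => a + n ∈ A) := by
      ext a; simp
    have h2 : (Finset.univ.filter (fun a : ZMod N => a ∈ S ∧ a + n ∈ Aᶜ)) =
        (Finset.univ.filter (fun a : ZMod N => a ∈ S)).filter (fun a => ¬ a + n ∈ A) := by
      ext a; simp
    rw [h1, h2, Finset.card_filter_add_card_filter_not]
    simp
  have hA := key A
  have hAc := key2 Aᶜ
  have hcard : Aᶜ.card = N - A.card := by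
    simp [Finset.card_compl, ZMod.card]
  have hle : A.card ≤ N := by
    simpa [ZMod.card] using Finset.card_le_univ A
  rw [iv_eq_filter, iv_eq_filter]
  omega
end

section
/- (Patterson) For every N ≥ 1 and all subsets A, B of ℤ_N: A and B are homometric if and only if their complements Aᶜ = ℤ_N \ A and Bᶜ = ℤ_N \ B are homometric. That is, iv(A) = iv(B) if and only if iv(Aᶜ) = iv(Bᶜ). -/
/-! Every pair `(a, b)` with `b - a = n` is determined by either coordinate. Counting the pairs
with first coordinate in `A` and those with second coordinate in `Aᶜ` gives
`iv A n + m = #A` and `iv Aᶜ n + m = #Aᶜ`, where `m` counts the pairs in `A × Aᶜ`.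
Hence `iv Aᶜ n - iv A n = #Aᶜ - #A` depends only on `#A = iv A 0`. -/

open Finset

namespace Finset

variable {G : Type*} [AddGroup G] [DecidableEq G]

theorem card_filter_prod_sub_eq_fst (s t : Finset G) (n : G) :
    #{p ∈ s ×ˢ t | p.2 - p.1 = n} = #{a ∈ s | n + a ∈ t} := by
  refine card_nbij' Prod.fst (fun a => (a, n + a)) ?_ ?_ ?_ ?_
  · rintro ⟨a, b⟩ h
    simp only [coe_filter, mem_product, Set.mem_ofPred_eq, sub_eq_iff_eq_add] at h ⊢
    obtain ⟨⟨ha, hb⟩, rfl⟩ := h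
    exact ⟨ha, hb⟩
  · intro a h
    simp_all
  · rintro ⟨a, b⟩ h
    simp_all [sub_eq_iff_eq_add]
  · intro a _
    rfl

theorem card_filter_prod_sub_eq_snd (s t : Finset G) (n : G) :
    #{p ∈ s ×ˢ t | p.2 - p.1 = n} = #{b ∈ t | -n + b ∈ s} := by
  refine card_nbij' Prod.snd (fun b => (-n + b, b)) ?_ ?_ ?_ ?_
  · rintro ⟨a, b⟩ h
    simp only [coe_filter, mem_product, Set.mem_ofPred_eq, sub_eq_iff_eq_add] at h ⊢
    obtain ⟨⟨ha, hb⟩, rfl⟩ := h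
    simpa using ⟨hb, ha⟩
  · intro b h
    simp_all
  · rintro ⟨a, b⟩ h
    simp_all [sub_eq_iff_eq_add]
  · intro b _
    rfl

theorem card_filter_prod_sub_eq_zero (s : Finset G) :
    #{p ∈ s ×ˢ s | p.2 - p.1 = 0} = #s := by
  rw [card_filter_prod_sub_eq_fst, filter_true_of_mem fun a ha => by rwa [zero_add]]

theorem card_filter_prod_compl_sub_add_card [Fintype G] (s : Finset G) (n : G) :
    #{p ∈ sᶜ ×ˢ sᶜ | p.2 - p.1 = n} + #s = #{p ∈ s ×ˢ s | p.2 - p.1 = n} + #sᶜ := by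
  have hfst : #{p ∈ s ×ˢ s | p.2 - p.1 = n} + #{p ∈ s ×ˢ sᶜ | p.2 - p.1 = n} = #s := by
    simp only [card_filter_prod_sub_eq_fst, mem_compl]
    exact card_filter_add_card_filter_not _
  have hsnd : #{p ∈ sᶜ ×ˢ sᶜ | p.2 - p.1 = n} + #{p ∈ s ×ˢ sᶜ | p.2 - p.1 = n} = #sᶜ := by
    simp only [card_filter_prod_sub_eq_snd, mem_compl]
    rw [add_comm]
    exact card_filter_add_card_filter_not _
  omega

end Finset

section

variable {N : ℕ}

theorem iv_zero (A : Finset (ZMod N)) : iv A 0 = #A :=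
  card_filter_prod_sub_eq_zero A

theorem iv_compl_add_card [NeZero N] (A : Finset (ZMod N)) (n : ZMod N) :
    iv Aᶜ n + #A = iv A n + #Aᶜ :=
  card_filter_prod_compl_sub_add_card A n

theorem iv_compl_eq_of_iv_eq [NeZero N] {A B : Finset (ZMod N)} (h : iv A = iv B) :
    iv Aᶜ = iv Bᶜ := by
  have hcard : #A = #B := by rw [← iv_zero A, ← iv_zero B, h]
  have hcard_compl : #Aᶜ = #Bᶜ := by rw [card_compl, card_compl, hcard]
  funext n
  have hA := iv_compl_add_card A n
  have hB := iv_compl_add_card B n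
  have hn := congrFun h n
  omega

end

/-- (Patterson) `A` and `B` are homometric iff their complements are. -/
theorem homometric_iff_compl_homometric (N : ℕ) [NeZero N]
    (A B : Finset (ZMod N)) :
    iv A = iv B ↔ iv Aᶜ = iv Bᶜ :=
  ⟨iv_compl_eq_of_iv_eq, fun h => by simpa using iv_compl_eq_of_iv_eq h⟩
end
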